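/- arXiv:2006.07709 — 7 statements merged into one kernel-verified Lean document; each statement's English description precedes it below -/
import Mathlib

section
/- Let (Ω, ℱ) be a measurable space, let ε > 0 and δ ≥ 0, and let μ₀, μ₁, …, μ_k (k ≥ 1) be probability measures on Ω such that for every i < k the pair (μ_i, μ_{i+1}) satisfies the (ε, δ)-DP inequality, i.e., for every measurable set S, μ_i(S) ≤ e^ε · μ_{i+1}(S) + δ. Then for every measurable set O, μ₀(O) ≤ e^{kε} · μ_k(O) + ((e^{kε} − 1)/(e^ε − 1)) · δ. -/
open MeasureTheory Real

theorem chain_aux {Ω : Type*} [MeasurableSpace Ω] (ε δ : ℝ)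
    (μ : ℕ → Measure Ω) (k : ℕ)
    (hDP : ∀ i < k, ∀ S : Set Ω, MeasurableSet S →
      μ i S ≤ ENNReal.ofReal (exp ε) * μ (i + 1) S + ENNReal.ofReal δ) :
    ∀ O : Set Ω, MeasurableSet O →
      μ 0 O ≤ (ENNReal.ofReal (exp ε))^k * μ k O +
        (∑ i ∈ Finset.range k, (ENNReal.ofReal (exp ε))^i) * ENNReal.ofReal δ := by
  induction k with
  | zero => intro O hO; simp
  | succ n ih =>
    intro O hO
    have h1 := ih (fun i hi => hDP i (by omega)) O hO
    have h2 := hDP n (by omega) O hO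
    calc μ 0 O ≤ (ENNReal.ofReal (exp ε))^n * μ n O +
        (∑ i ∈ Finset.range n, (ENNReal.ofReal (exp ε))^i) * ENNReal.ofReal δ := h1
      _ ≤ (ENNReal.ofReal (exp ε))^n *
            (ENNReal.ofReal (exp ε) * μ (n+1) O + ENNReal.ofReal δ) +
          (∑ i ∈ Finset.range n, (ENNReal.ofReal (exp ε))^i) * ENNReal.ofReal δ := by
        gcongr
      _ = (ENNReal.ofReal (exp ε))^(n+1) * μ (n+1) O +
          (∑ i ∈ Finset.range (n+1), (ENNReal.ofReal (exp ε))^i) * ENNReal.ofReal δ := by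
        rw [Finset.sum_range_succ]
        ring

/-- Group privacy: if `μ 0, μ 1, …, μ k` is a chain of probability measures such that
each consecutive pair satisfies the `(ε, δ)`-DP inequality, then the pair
`(μ 0, μ k)` satisfies the `(kε, ((e^{kε} − 1)/(e^ε − 1))·δ)`-DP inequality. -/
theorem stmt_0 {Ω : Type*} [MeasurableSpace Ω] (ε δ : ℝ) (hε : 0 < ε) (hδ : 0 ≤ δ)
    (k : ℕ) (hk : 1 ≤ k) (μ : ℕ → Measure Ω) (hprob : ∀ i ≤ k, IsProbabilityMeasure (μ i))
    (hDP : ∀ i < k, ∀ S : Set Ω, MeasurableSet S →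
      μ i S ≤ ENNReal.ofReal (exp ε) * μ (i + 1) S + ENNReal.ofReal δ) :
    ∀ O : Set Ω, MeasurableSet O →
      μ 0 O ≤ ENNReal.ofReal (exp (k * ε)) * μ k O +
        ENNReal.ofReal (((exp (k * ε) - 1) / (exp ε - 1)) * δ) := by
  intro O hO
  have h := chain_aux ε δ μ k hDP O hO
  have hpow : (ENNReal.ofReal (exp ε))^k = ENNReal.ofReal (exp (k * ε)) := by
    rw [← ENNReal.ofReal_pow (exp_pos ε).le, ← exp_nat_mul]
  have hε1 : (1:ℝ) < exp ε := by
    rw [← exp_zero]; exact exp_lt_exp.mpr hε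
  have hsum : (∑ i ∈ Finset.range k, (ENNReal.ofReal (exp ε))^i)
      = ENNReal.ofReal ((exp (k * ε) - 1) / (exp ε - 1)) := by
    have : (∑ i ∈ Finset.range k, (ENNReal.ofReal (exp ε))^i)
        = ENNReal.ofReal (∑ i ∈ Finset.range k, (exp ε)^i) := by
      rw [ENNReal.ofReal_sum_of_nonneg (fun i _ => pow_nonneg (exp_pos ε).le i)]
      exact Finset.sum_congr rfl fun i _ => (ENNReal.ofReal_pow (exp_pos ε).le i).symm
    rw [this]
    congr 1
    rw [geom_sum_eq (ne_of_gt hε1), ← exp_nat_mul]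
  rw [hpow, hsum] at h
  rwa [← ENNReal.ofReal_mul (div_nonneg (by
    nlinarith [one_le_exp (by positivity : (0:ℝ) ≤ (k:ℝ) * ε)]) (by linarith))] at *
end

section
/- Let (Ω, ℱ) be a measurable space, let μ₀ and μ₁ be probability measures on Ω, let ε ≥ 0 and let k ≥ 1 be a natural number. Suppose that for every measurable set S both μ₀(S) ≤ e^{kε} · μ₁(S) and μ₁(S) ≤ e^{kε} · μ₀(S). Then for every measurable set O, the distinguishing accuracy (μ₀(O) + μ₁(Ω \ O))/2 is at most e^{kε} / (1 + e^{kε}). -/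
open MeasureTheory Real

/-- Any distinguisher (acceptance set `O`) between two distributions satisfying the
two-sided `(kε, 0)`-DP inequality has accuracy at most `e^{kε}/(1 + e^{kε})`. -/
theorem stmt_3 {Ω : Type*} [MeasurableSpace Ω] (μ₀ μ₁ : Measure Ω)
    [IsProbabilityMeasure μ₀] [IsProbabilityMeasure μ₁]
    (ε : ℝ) (hε : 0 ≤ ε) (k : ℕ) (hk : 1 ≤ k)
    (hDP₀₁ : ∀ S : Set Ω, MeasurableSet S →
      μ₀ S ≤ ENNReal.ofReal (exp ((k : ℝ) * ε)) * μ₁ S)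
    (hDP₁₀ : ∀ S : Set Ω, MeasurableSet S →
      μ₁ S ≤ ENNReal.ofReal (exp ((k : ℝ) * ε)) * μ₀ S) :
    ∀ O : Set Ω, MeasurableSet O →
      ((μ₀ O).toReal + (μ₁ Oᶜ).toReal) / 2 ≤
        exp ((k : ℝ) * ε) / (1 + exp ((k : ℝ) * ε)) := by
  intro O hO
  set c := exp ((k : ℝ) * ε) with hc
  have hc1 : (1 : ℝ) ≤ c := one_le_exp (by positivity)
  have hfin0 : μ₀ O ≠ ⊤ := measure_ne_top _ _
  have hfin1 : μ₁ O ≠ ⊤ := measure_ne_top _ _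
  have h1 : (μ₀ O).toReal ≤ c * (μ₁ O).toReal := by
    have := ENNReal.toReal_mono (by finiteness) (hDP₀₁ O hO)
    rwa [ENNReal.toReal_mul, ENNReal.toReal_ofReal (by linarith)] at this
  have h2 : (μ₁ Oᶜ).toReal ≤ c * (μ₀ Oᶜ).toReal := by
    have := ENNReal.toReal_mono (by finiteness) (hDP₁₀ Oᶜ hO.compl)
    rwa [ENNReal.toReal_mul, ENNReal.toReal_ofReal (by linarith)] at this
  have e0 : (μ₀ O).toReal + (μ₀ Oᶜ).toReal = 1 := by
    have h := measure_add_measure_compl (μ := μ₀) hO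
    have := congrArg ENNReal.toReal h
    rwa [ENNReal.toReal_add (measure_ne_top _ _) (measure_ne_top _ _),
      measure_univ, ENNReal.toReal_one] at this
  have e1 : (μ₁ O).toReal + (μ₁ Oᶜ).toReal = 1 := by
    have h := measure_add_measure_compl (μ := μ₁) hO
    have := congrArg ENNReal.toReal h
    rwa [ENNReal.toReal_add (measure_ne_top _ _) (measure_ne_top _ _),
      measure_univ, ENNReal.toReal_one] at this
  have ha : 0 ≤ (μ₀ O).toReal := ENNReal.toReal_nonneg
  have hb : 0 ≤ (μ₁ Oᶜ).toReal := ENNReal.toReal_nonneg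
  rw [div_le_div_iff₀ (by norm_num) (by linarith)]
  nlinarith [h1, h2, e0, e1]
end

section
/- Let δ ≥ 0, let k ≥ 1 be a natural number, and let p₀, p₁ ∈ [0, 1] with p₁ > 0 and p₀ > p₁ + kδ. Define f₀(x) = p₁·x^{k+1} − (p₁ − δ)·x^k − p₀·x + (p₀ − δ). Then f₀(1) = 0 and f₀ has exactly one root in the open interval (1, ∞); moreover f₀ is negative on the interval between 1 and that root and positive to the right of it. -/
/-- Let `f₀(x) = p₁·x^(k+1) − (p₁−δ)·x^k − p₀·x + (p₀−δ)` with `p₁ > 0` and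
`p₀ > p₁ + kδ`. Then `f₀(1) = 0`, and `f₀` has exactly one root `r` in `(1, ∞)`;
moreover `f₀` is negative on `(1, r)` and positive on `(r, ∞)`. -/
theorem stmt_5 (δ : ℝ) (hδ : 0 ≤ δ) (k : ℕ) (hk : 1 ≤ k)
    (p₀ p₁ : ℝ) (hp₀ : p₀ ∈ Set.Icc (0:ℝ) 1) (hp₁ : p₁ ∈ Set.Icc (0:ℝ) 1)
    (hp₁pos : 0 < p₁) (hgap : p₁ + (k : ℝ) * δ < p₀)
    (f₀ : ℝ → ℝ)
    (hf₀ : ∀ x, f₀ x = p₁ * x ^ (k + 1) - (p₁ - δ) * x ^ k - p₀ * x + (p₀ - δ)) :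
    f₀ 1 = 0 ∧
      ∃ r : ℝ, 1 < r ∧ f₀ r = 0 ∧
        (∀ y : ℝ, 1 < y → f₀ y = 0 → y = r) ∧
        (∀ y : ℝ, 1 < y → y < r → f₀ y < 0) ∧
        (∀ y : ℝ, r < y → 0 < f₀ y) := by
  set g : ℝ → ℝ := fun y => p₁ * y ^ k - p₀ + δ * ∑ i ∈ Finset.range k, y ^ i with hg_def
  have hfg : ∀ y, f₀ y = (y - 1) * g y := by
    intro y
    have h := geom_sum_mul y k
    rw [hf₀]
    simp only [hg_def]
    linear_combination (-δ) * h
  -- g is strictly monotone on [1, ∞)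
  have hmono : ∀ a b : ℝ, 1 ≤ a → a < b → g a < g b := by
    intro a b ha hab
    have ha0 : (0:ℝ) ≤ a := by linarith
    have h1 : p₁ * a ^ k < p₁ * b ^ k := by
      have := pow_lt_pow_left₀ hab ha0 (by omega : k ≠ 0)
      nlinarith
    have h2 : (∑ i ∈ Finset.range k, a ^ i) ≤ ∑ i ∈ Finset.range k, b ^ i :=
      Finset.sum_le_sum fun i _ => pow_le_pow_left₀ ha0 hab.le i
    have h3 : δ * (∑ i ∈ Finset.range k, a ^ i) ≤ δ * ∑ i ∈ Finset.range k, b ^ i :=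
      mul_le_mul_of_nonneg_left h2 hδ
    simp only [hg_def]
    linarith
  have hg1 : g 1 < 0 := by
    simp only [hg_def, one_pow, Finset.sum_const, Finset.card_range, nsmul_eq_mul, mul_one]
    linarith
  -- g is positive at M
  set M : ℝ := max 2 ((p₀ + 1) / p₁) with hM_def
  have hM1 : (1:ℝ) < M := lt_of_lt_of_le one_lt_two (le_max_left _ _)
  have hMk : M ≤ M ^ k := le_self_pow₀ (by linarith) (by omega)
  have hgM : 0 < g M := by
    have h1 : (p₀ + 1) / p₁ ≤ M := le_max_right _ _
    have h2 : p₀ + 1 ≤ p₁ * M := by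
      rw [div_le_iff₀ hp₁pos] at h1; linarith [h1]
    have h3 : p₁ * M ≤ p₁ * M ^ k := mul_le_mul_of_nonneg_left hMk hp₁pos.le
    have h4 : 0 ≤ δ * ∑ i ∈ Finset.range k, M ^ i := by
      apply mul_nonneg hδ
      apply Finset.sum_nonneg
      intro i _
      positivity
    simp only [hg_def]
    linarith
  -- IVT for g on [1, M]
  have hcont : ContinuousOn g (Set.Icc 1 M) := by
    apply Continuous.continuousOn
    simp only [hg_def]
    continuity
  have hIVT : (0:ℝ) ∈ g '' Set.Ioo 1 M :=
    intermediate_value_Ioo hM1.le hcont ⟨hg1, hgM⟩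
  obtain ⟨r, hr_mem, hgr⟩ := hIVT
  have hr1 : 1 < r := hr_mem.1
  refine ⟨by rw [hf₀]; ring, r, hr1, ?_, ?_, ?_, ?_⟩
  · rw [hfg]; rw [hgr]; ring
  · intro y hy hfy
    rw [hfg] at hfy
    have hgy : g y = 0 := by
      rcases mul_eq_zero.1 hfy with h | h
      · linarith
      · exact h
    rcases lt_trichotomy y r with h | h | h
    · have := hmono y r hy.le h; rw [hgr, hgy] at this; linarith
    · exact h
    · have := hmono r y hr1.le h; rw [hgr, hgy] at this; linarith
  · intro y hy hyr
    rw [hfg]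
    have : g y < 0 := by have := hmono y r hy.le hyr; linarith [hgr ▸ this]
    have hy1 : 0 < y - 1 := by linarith
    nlinarith
  · intro y hy
    rw [hfg]
    have : 0 < g y := by have := hmono r y hr1.le hy; rw [hgr] at this; linarith
    have hy1 : 0 < y - 1 := by linarith
    nlinarith
end

section
/- Let δ ≥ 0, let k ≥ 1 be a natural number, and let p₀, p₁ ∈ [0, 1] satisfy p₁ > 0, 1 − p₀ > 0, p₀ > p₁ + kδ, and p₀ + p₁ > 1. Define f₀(x) = p₁·x^{k+1} − (p₁ − δ)·x^k − p₀·x + (p₀ − δ) and f₁(x) = (1 − p₀)·x^{k+1} − (1 − p₀ − δ)·x^k − (1 − p₁)·x + (1 − p₁ − δ). Then f₀ and f₁ each have a unique root in the open interval (1, ∞), and the root of f₀ in (1, ∞) is strictly smaller than the root of f₁ in (1, ∞). -/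
private lemma aux_mono (a δ : ℝ) (ha : 0 < a) (hδ : 0 ≤ δ) (k : ℕ) (hk : 1 ≤ k) :
    StrictMonoOn (fun x : ℝ => a * x ^ k + δ * ∑ i ∈ Finset.range k, x ^ i - b) (Set.Ici 1) := by
  intro x hx y hy hxy
  simp only [Set.mem_Ici] at hx hy
  have h1 : a * x ^ k < a * y ^ k := by
    have := pow_lt_pow_left₀ hxy (by linarith : (0:ℝ) ≤ x) (by omega : k ≠ 0)
    nlinarith
  have h2 : (∑ i ∈ Finset.range k, x ^ i) ≤ ∑ i ∈ Finset.range k, y ^ i := by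
    apply Finset.sum_le_sum
    intro i _
    exact pow_le_pow_left₀ (by linarith) (le_of_lt hxy) i
  have h3 : δ * ∑ i ∈ Finset.range k, x ^ i ≤ δ * ∑ i ∈ Finset.range k, y ^ i :=
    mul_le_mul_of_nonneg_left h2 hδ
  simp only
  linarith

private lemma aux_exu (a b δ : ℝ) (ha : 0 < a) (hδ : 0 ≤ δ) (k : ℕ) (hk : 1 ≤ k)
    (hb : a + (k : ℝ) * δ < b) :
    ∃! r : ℝ, 1 < r ∧ a * r ^ k + δ * ∑ i ∈ Finset.range k, r ^ i - b = 0 := by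
  set g : ℝ → ℝ := fun x => a * x ^ k + δ * ∑ i ∈ Finset.range k, x ^ i - b with hg
  have hmono : StrictMonoOn g (Set.Ici 1) := aux_mono a δ ha hδ k hk
  have hcont : Continuous g := by
    apply Continuous.sub _ continuous_const
    exact (continuous_const.mul (continuous_pow k)).add
      (continuous_const.mul (continuous_finset_sum _ fun i _ => continuous_pow i))
  have hg1 : g 1 < 0 := by
    simp only [hg, one_pow, Finset.sum_const, Finset.card_range, nsmul_eq_mul, mul_one]
    linarith
  set M : ℝ := max 2 ((b + 1) / a) with hM
  have hM2 : (2:ℝ) ≤ M := le_max_left _ _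
  have hM1 : (1:ℝ) < M := by linarith
  have hMb : b + 1 ≤ a * M := by
    have : (b + 1) / a ≤ M := le_max_right _ _
    calc b + 1 = a * ((b+1)/a) := by field_simp
    _ ≤ a * M := by nlinarith
  have hMk : a * M ≤ a * M ^ k := by
    have h1 : M ≤ M ^ k := le_self_pow₀ (by linarith) (by omega)
    nlinarith
  have hsumpos : 0 ≤ δ * ∑ i ∈ Finset.range k, M ^ i := by
    apply mul_nonneg hδ
    apply Finset.sum_nonneg
    intro i _
    positivity
  have hgM : 0 < g M := by
    simp only [hg]
    linarith
  obtain ⟨r, hr, hr0⟩ := intermediate_value_Ioo (le_of_lt hM1) hcont.continuousOn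
    (Set.mem_Ioo.mpr ⟨hg1, hgM⟩)
  refine ⟨r, ⟨hr.1, hr0⟩, ?_⟩
  rintro s ⟨hs1, hs0⟩
  exact hmono.injOn (Set.mem_Ici.mpr (le_of_lt hs1)) (Set.mem_Ici.mpr (le_of_lt hr.1))
    (hs0.trans hr0.symm)

private lemma aux_factor (a b δ : ℝ) (k : ℕ) (f : ℝ → ℝ)
    (hf : ∀ x, f x = a * x ^ (k + 1) - (a - δ) * x ^ k - b * x + (b - δ)) (x : ℝ) :
    f x = (x - 1) * (a * x ^ k + δ * ∑ i ∈ Finset.range k, x ^ i - b) := by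
  rw [hf]
  have hgs := geom_sum_mul x k
  linear_combination -δ * hgs

/-- Under the hypotheses `p₁ > 0`, `1 − p₀ > 0`, `p₀ > p₁ + kδ`, and `p₀ + p₁ > 1`,
the polynomials `f₀` and `f₁` each have a unique root in `(1, ∞)`, and the root of
`f₀` is strictly smaller than the root of `f₁`. -/
theorem stmt_8 (δ : ℝ) (hδ : 0 ≤ δ) (k : ℕ) (hk : 1 ≤ k)
    (p₀ p₁ : ℝ) (hp₀ : p₀ ∈ Set.Icc (0:ℝ) 1) (hp₁ : p₁ ∈ Set.Icc (0:ℝ) 1)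
    (hp₁pos : 0 < p₁) (hp₀lt : 0 < 1 - p₀)
    (hgap : p₁ + (k : ℝ) * δ < p₀) (hsum : 1 < p₀ + p₁)
    (f₀ f₁ : ℝ → ℝ)
    (hf₀ : ∀ x, f₀ x = p₁ * x ^ (k + 1) - (p₁ - δ) * x ^ k - p₀ * x + (p₀ - δ))
    (hf₁ : ∀ x, f₁ x = (1 - p₀) * x ^ (k + 1) - (1 - p₀ - δ) * x ^ k
      - (1 - p₁) * x + (1 - p₁ - δ)) :
    (∃! r : ℝ, 1 < r ∧ f₀ r = 0) ∧ (∃! r : ℝ, 1 < r ∧ f₁ r = 0) ∧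
      ∀ r₀ r₁ : ℝ, 1 < r₀ → f₀ r₀ = 0 → 1 < r₁ → f₁ r₁ = 0 → r₀ < r₁ := by
  set g₀ : ℝ → ℝ := fun x => p₁ * x ^ k + δ * ∑ i ∈ Finset.range k, x ^ i - p₀ with hg₀
  set g₁ : ℝ → ℝ := fun x => (1 - p₀) * x ^ k + δ * ∑ i ∈ Finset.range k, x ^ i - (1 - p₁)
    with hg₁
  have hfac₀ : ∀ x, f₀ x = (x - 1) * g₀ x := aux_factor p₁ p₀ δ k f₀ hf₀
  have hfac₁ : ∀ x, f₁ x = (x - 1) * g₁ x := aux_factor (1 - p₀) (1 - p₁) δ k f₁ hf₁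
  have hgap₁ : (1 - p₀) + (k : ℝ) * δ < 1 - p₁ := by linarith
  have hequiv₀ : ∀ x : ℝ, 1 < x → (f₀ x = 0 ↔ g₀ x = 0) := by
    intro x hx
    rw [hfac₀ x]
    constructor
    · intro h
      rcases mul_eq_zero.mp h with h | h
      · linarith
      · exact h
    · intro h; rw [h, mul_zero]
  have hequiv₁ : ∀ x : ℝ, 1 < x → (f₁ x = 0 ↔ g₁ x = 0) := by
    intro x hx
    rw [hfac₁ x]
    constructor
    · intro h
      rcases mul_eq_zero.mp h with h | h
      · linarith
      · exact h
    · intro h; rw [h, mul_zero]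
  obtain ⟨r₀', ⟨hr₀'1, hr₀'0⟩, hr₀'u⟩ := aux_exu p₁ p₀ δ hp₁pos hδ k hk hgap
  obtain ⟨r₁', ⟨hr₁'1, hr₁'0⟩, hr₁'u⟩ := aux_exu (1 - p₀) (1 - p₁) δ hp₀lt hδ k hk hgap₁
  have hmono₁ : StrictMonoOn g₁ (Set.Ici 1) := aux_mono (1 - p₀) δ hp₀lt hδ k hk
  refine ⟨⟨r₀', ⟨hr₀'1, (hequiv₀ r₀' hr₀'1).mpr hr₀'0⟩, ?_⟩,
    ⟨r₁', ⟨hr₁'1, (hequiv₁ r₁' hr₁'1).mpr hr₁'0⟩, ?_⟩, ?_⟩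
  · rintro s ⟨hs1, hs0⟩
    exact hr₀'u s ⟨hs1, (hequiv₀ s hs1).mp hs0⟩
  · rintro s ⟨hs1, hs0⟩
    exact hr₁'u s ⟨hs1, (hequiv₁ s hs1).mp hs0⟩
  · intro r₀ r₁ h₀1 h₀0 h₁1 h₁0
    have hg₀0 : g₀ r₀ = 0 := (hequiv₀ r₀ h₀1).mp h₀0
    have hg₁0 : g₁ r₁ = 0 := (hequiv₁ r₁ h₁1).mp h₁0
    have hpow : 1 < r₀ ^ k := one_lt_pow₀ h₀1 (by omega)
    have hg₁r₀ : g₁ r₀ < 0 := by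
      have : g₁ r₀ = g₀ r₀ + (1 - p₀ - p₁) * (r₀ ^ k - 1) := by
        simp only [hg₀, hg₁]; ring
      rw [this, hg₀0]
      nlinarith
    by_contra hle
    push_neg at hle
    rcases lt_or_eq_of_le hle with h | h
    · have := hmono₁ (Set.mem_Ici.mpr (le_of_lt h₁1)) (Set.mem_Ici.mpr (le_of_lt h₀1)) h
      rw [hg₁0] at this
      linarith
    · rw [h] at hg₁0; linarith
end

section
/- Let X be an n × d real matrix and Y ∈ ℝⁿ, let λ > 0, let s ≥ 0 and let v ∈ ℝᵈ be a unit vector with (XᵀX)v = s·v. Let y_p ∈ ℝ, and let X_p be the (n+1) × d matrix obtained from X by appending v as a new row, let Y₀ ∈ ℝ^{n+1} be Y with the entry y_p appended, and let Y₁ ∈ ℝ^{n+1} be Y with the entry −y_p appended. Then (λ·I + X_pᵀX_p)⁻¹ X_pᵀ Y₀ − (λ·I + X_pᵀX_p)⁻¹ X_pᵀ Y₁ = (2·y_p/(λ + s + 1)) · v. -/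
/-!
Appending the row `v` adds the rank-one term `v vᵀ` to the Gram matrix, so `v` stays an
eigenvector of the ridge matrix `A = λ I + X_pᵀ X_p`, now with eigenvalue `λ + s + 1`.
The two label vectors differ only in the last entry, so `X_pᵀ Y₀ - X_pᵀ Y₁ = 2 y_p v`, and
`A⁻¹` acts on `v` as multiplication by `(λ + s + 1)⁻¹`.
-/

open Matrix

section Snoc

variable {R : Type*} [CommSemiring R] {n d : ℕ}

lemma of_snoc_mulVec (X : Matrix (Fin n) (Fin d) R) (v w : Fin d → R) :
    of (Fin.snoc X v) *ᵥ w = Fin.snoc (X *ᵥ w) (v ⬝ᵥ w) := by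
  ext i
  refine Fin.lastCases ?_ (fun _ => ?_) i <;> simp [mulVec, dotProduct, Fin.snoc]

lemma transpose_of_snoc_mulVec_snoc (X : Matrix (Fin n) (Fin d) R) (v : Fin d → R)
    (u : Fin n → R) (a : R) :
    (of (Fin.snoc X v))ᵀ *ᵥ Fin.snoc u a = Xᵀ *ᵥ u + a • v := by
  ext j
  simp [mulVec, dotProduct, Fin.sum_univ_castSucc, mul_comm, Fin.snoc]

lemma gram_of_snoc_mulVec (X : Matrix (Fin n) (Fin d) R) (v w : Fin d → R) :
    ((of (Fin.snoc X v))ᵀ * of (Fin.snoc X v)) *ᵥ w = (Xᵀ * X) *ᵥ w + (v ⬝ᵥ w) • v := by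
  rw [← mulVec_mulVec, of_snoc_mulVec, transpose_of_snoc_mulVec_snoc, mulVec_mulVec]

end Snoc

lemma posDef_smul_one_add_transpose_mul_self {m d : Type*} [Fintype m] [Fintype d]
    [DecidableEq d] {lam : ℝ} (hlam : 0 < lam) (X : Matrix m d ℝ) :
    (lam • (1 : Matrix d d ℝ) + Xᵀ * X).PosDef := by
  refine PosDef.add_posSemidef ?_ ?_
  · rw [smul_one_eq_diagonal]
    exact PosDef.diagonal fun _ => hlam
  · simpa only [conjTranspose_eq_transpose_of_trivial] using
      posSemidef_conjTranspose_mul_self X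

lemma inv_mulVec_eq_inv_smul_of_mulVec_eq_smul {ι K : Type*} [Fintype ι] [DecidableEq ι]
    [Field K] {A : Matrix ι ι K} (hA : IsUnit A) {c : K} {v : ι → K}
    (hv : A *ᵥ v = c • v) : A⁻¹ *ᵥ v = c⁻¹ • v := by
  have hdet : IsUnit A.det := (isUnit_iff_isUnit_det A).mp hA
  have hv' : v = c • A⁻¹ *ᵥ v := by
    rw [← mulVec_smul, ← hv, mulVec_mulVec, nonsing_inv_mul A hdet, one_mulVec]
  by_cases hc : c = 0
  · rw [hc, zero_smul] at hv'
    rw [hc, _root_.inv_zero, zero_smul, hv', mulVec_zero]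
  · conv_rhs => rw [hv']
    rw [smul_smul, inv_mul_cancel₀ hc, one_smul]

theorem stmt_10_general {n d : ℕ} (X : Matrix (Fin n) (Fin d) ℝ) (Y : Fin n → ℝ)
    (lam : ℝ) (hlam : 0 < lam) (s : ℝ)
    (v : Fin d → ℝ) (hv : v ⬝ᵥ v = 1) (heig : (Xᵀ * X).mulVec v = s • v)
    (yp : ℝ) (Xp : Matrix (Fin (n + 1)) (Fin d) ℝ)
    (hXp : Xp = Matrix.of (Fin.snoc X v))
    (Y₀ Y₁ : Fin (n + 1) → ℝ) (hY₀ : Y₀ = Fin.snoc Y yp) (hY₁ : Y₁ = Fin.snoc Y (-yp)) :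
    (lam • (1 : Matrix (Fin d) (Fin d) ℝ) + Xpᵀ * Xp)⁻¹.mulVec (Xpᵀ.mulVec Y₀) -
        (lam • (1 : Matrix (Fin d) (Fin d) ℝ) + Xpᵀ * Xp)⁻¹.mulVec (Xpᵀ.mulVec Y₁) =
      (2 * yp / (lam + s + 1)) • v := by
  subst hXp hY₀ hY₁
  set A := lam • (1 : Matrix (Fin d) (Fin d) ℝ) + (of (Fin.snoc X v))ᵀ * of (Fin.snoc X v)
  have hAv : A *ᵥ v = (lam + s + 1) • v := by
    rw [add_mulVec, smul_mulVec, one_mulVec, gram_of_snoc_mulVec, heig, hv, add_smul, add_smul,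
      one_smul, add_assoc]
  have hlabels : (of (Fin.snoc X v))ᵀ *ᵥ Fin.snoc Y yp - (of (Fin.snoc X v))ᵀ *ᵥ Fin.snoc Y (-yp)
      = (2 * yp) • v := by
    rw [transpose_of_snoc_mulVec_snoc, transpose_of_snoc_mulVec_snoc, add_sub_add_left_eq_sub,
      ← sub_smul, sub_neg_eq_add, two_mul]
  have hA : IsUnit A := (posDef_smul_one_add_transpose_mul_self hlam _).isUnit
  rw [← mulVec_sub, hlabels, mulVec_smul, inv_mulVec_eq_inv_smul_of_mulVec_eq_smul hA hAv,
    smul_smul, div_eq_mul_inv]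

/-- Separation of the ridge-regression solutions for the two poisoned datasets:
appending the unit eigenvector `v` of `XᵀX` (with smallest eigenvalue `s`) as a row
with labels `y_p` and `−y_p` yields solutions differing by `(2y_p/(lam+s+1))•v`. -/
theorem stmt_10 {n d : ℕ} (X : Matrix (Fin n) (Fin d) ℝ) (Y : Fin n → ℝ)
    (lam : ℝ) (hlam : 0 < lam) (s : ℝ) (hs : 0 ≤ s)
    (v : Fin d → ℝ) (hv : v ⬝ᵥ v = 1) (heig : (Xᵀ * X).mulVec v = s • v)
    (yp : ℝ) (Xp : Matrix (Fin (n + 1)) (Fin d) ℝ)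
    (hXp : Xp = Matrix.of (Fin.snoc X v))
    (Y₀ Y₁ : Fin (n + 1) → ℝ) (hY₀ : Y₀ = Fin.snoc Y yp) (hY₁ : Y₁ = Fin.snoc Y (-yp)) :
    (lam • (1 : Matrix (Fin d) (Fin d) ℝ) + Xpᵀ * Xp)⁻¹.mulVec (Xpᵀ.mulVec Y₀) -
        (lam • (1 : Matrix (Fin d) (Fin d) ℝ) + Xpᵀ * Xp)⁻¹.mulVec (Xpᵀ.mulVec Y₁) =
      (2 * yp / (lam + s + 1)) • v :=
  stmt_10_general X Y lam hlam s v hv heig yp Xp hXp Y₀ Y₁ hY₀ hY₁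
end

section
/- Let t and δ be real numbers with 0 ≤ δ ≤ t < 1/2. Then ln((1/2 − δ + t)/(1/2 − t)) ≥ 4·(t − δ). -/
/-! With `u = t - δ`, shrinking the denominator `1/2 - t` to `1/2 - u` only lowers the ratio, and
`log ((1/2 + u) / (1/2 - u)) = 2 artanh (2u) ≥ 4u` by the first term of the odd power series of
`artanh`. -/

open Real

lemma two_mul_le_log_one_add_div_one_sub {x : ℝ} (hx0 : 0 ≤ x) (hx1 : x < 1) :
    2 * x ≤ log ((1 + x) / (1 - x)) := by
  rw [log_div (by linarith) (by linarith)]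
  have hseries := hasSum_log_sub_log_of_abs_lt_one (abs_lt.mpr ⟨by linarith, hx1⟩)
  simpa using le_hasSum hseries 0 fun k _ ↦ by positivity

/-- If `0 ≤ δ ≤ t < 1/2`, then `ln((1/2 − δ + t)/(1/2 − t)) ≥ 4(t − δ)`. -/
theorem stmt_13 (t δ : ℝ) (hδ0 : 0 ≤ δ) (hδt : δ ≤ t) (ht : t < 1 / 2) :
    4 * (t - δ) ≤ Real.log ((1 / 2 - δ + t) / (1 / 2 - t)) := by
  set u := t - δ
  have hu0 : 0 ≤ u := by linarith
  have hu1 : 2 * u < 1 := by linarith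
  have hratio : (1 + 2 * u) / (1 - 2 * u) = (1 / 2 + u) / (1 / 2 - u) := by
    rw [div_eq_div_iff (by linarith) (by linarith)]
    ring
  calc 4 * u = 2 * (2 * u) := by ring
    _ ≤ log ((1 / 2 + u) / (1 / 2 - u)) := by
      rw [← hratio]
      exact two_mul_le_log_one_add_div_one_sub (by positivity) hu1
    _ ≤ log ((1 / 2 - δ + t) / (1 / 2 - t)) := by
      apply log_le_log (div_pos (by linarith) (by linarith))
      rw [show 1 / 2 - δ + t = 1 / 2 + u by ring]
      exact div_le_div_of_nonneg_left (by linarith) (by linarith) (by linarith)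
end

section
/- Let σ > 0 and c > 0, let t = (c/(σ·√(2π))) · exp(−c²/(2σ²)), and let δ be a real with 0 ≤ δ ≤ t. Let γ be the Gaussian probability measure on ℝ with mean 0 and variance σ², and set p = γ((−∞, c)). Then 0 < p − δ, 0 < 1 − p, and ln((p − δ)/(1 − p)) ≥ 4·(t − δ). -/
open MeasureTheory Real ProbabilityTheory Set

/-!
The density of `N(0, σ²)` is decreasing on `[0, ∞)`, so the mass of `[0, c)` is at least
`c · φ(c) = t`, and with the mass `1/2` of `(-∞, 0)` this gives `p ≥ 1/2 + t`;
`p < 1` because the Gaussian has full support. Writing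
`s = t - δ`, the odds `(p - δ)/(1 - p)` are then at least `(1 + 2s)/(1 - 2s)`, whose logarithm
`2 artanh (2s)` is at least `4s` by the power series of `artanh`.
-/

namespace Real

theorem two_mul_le_log_div {x : ℝ} (hx0 : 0 ≤ x) (hx1 : x < 1) :
    2 * x ≤ log ((1 + x) / (1 - x)) := by
  have hs := hasSum_log_sub_log_of_abs_lt_one (abs_lt.2 ⟨by linarith, hx1⟩)
  rw [← log_div (by linarith) (by linarith)] at hs
  simpa using le_hasSum hs 0 fun k _ => by positivity

end Real

namespace ProbabilityTheory

variable {v : NNReal}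

theorem gaussianPDFReal_antitoneOn (μ : ℝ) : AntitoneOn (gaussianPDFReal μ v) (Ici μ) := by
  intro x hx y _ hxy
  simp only [gaussianPDFReal]
  gcongr
  exact sub_nonneg.2 hx

theorem gaussianReal_zero_real_Iio_zero (hv : v ≠ 0) :
    (gaussianReal 0 v).real (Iio 0) = 1 / 2 := by
  have : NullSingletonClass (gaussianReal 0 v) := nullSingletonClass_gaussianReal hv
  have hsymm : (gaussianReal 0 v).real (Ici 0) = (gaussianReal 0 v).real (Iio 0) := by
    -- `Ici 0 =ᵐ Ioi 0`, and `x ↦ -x` preserves `N(0, v)` while swapping `Ioi 0` and `Iio 0`.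
    conv_lhs => rw [← measureReal_congr Ioi_ae_eq_Ici, ← neg_zero, ← gaussianReal_map_neg]
    rw [map_measureReal_apply measurable_neg measurableSet_Ioi]
    simp
  have htotal :=
    measureReal_add_measureReal_compl (μ := gaussianReal 0 v) (measurableSet_Iio (a := 0))
  rw [compl_Iio, hsymm, probReal_univ] at htotal
  linarith

theorem gaussianReal_real_Iio_lt_one (μ : ℝ) (hv : v ≠ 0) (c : ℝ) :
    (gaussianReal μ v).real (Iio c) < 1 := by
  have hpos : 0 < (gaussianReal μ v).real (Ici c) := by
    refine ENNReal.toReal_pos (fun h => ?_) (measure_ne_top _ _)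
    simpa using gaussianReal_absolutelyContinuous' μ hv h
  have htotal :=
    measureReal_add_measureReal_compl (μ := gaussianReal μ v) (measurableSet_Iio (a := c))
  rw [compl_Iio, probReal_univ] at htotal
  linarith

theorem gaussianReal_real_eq_setIntegral (μ : ℝ) (hv : v ≠ 0) (s : Set ℝ) :
    (gaussianReal μ v).real s = ∫ x in s, gaussianPDFReal μ v x := by
  rw [measureReal_def, gaussianReal_apply_eq_integral μ hv,
    ENNReal.toReal_ofReal (setIntegral_nonneg_of_ae (ae_of_all _ (gaussianPDFReal_nonneg μ v)))]

theorem half_add_mul_gaussianPDFReal_le (hv : v ≠ 0) {c : ℝ} (hc : 0 ≤ c) :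
    1 / 2 + c * gaussianPDFReal 0 v c ≤ (gaussianReal 0 v).real (Iio c) := by
  have hIco : c * gaussianPDFReal 0 v c ≤ ∫ x in Ico 0 c, gaussianPDFReal 0 v x := by
    have h := setIntegral_ge_of_const_le_real measurableSet_Ico measure_Ico_lt_top.ne
      (fun x hx => gaussianPDFReal_antitoneOn 0 hx.1 hc hx.2.le)
      (integrable_gaussianPDFReal 0 v).integrableOn
    rwa [Real.volume_real_Ico_of_le hc, sub_zero, mul_comm] at h
  have hdisj : Disjoint (Iio (0 : ℝ)) (Ico 0 c) :=
    (Iio_disjoint_Ici le_rfl).mono_right Ico_subset_Ici_self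
  rw [← Iio_union_Ico_eq_Iio hc, measureReal_union hdisj measurableSet_Ico,
    gaussianReal_zero_real_Iio_zero hv, gaussianReal_real_eq_setIntegral 0 hv]
  linarith

end ProbabilityTheory

theorem four_mul_sub_le_log_div {p t δ : ℝ} (hδ0 : 0 ≤ δ) (hδt : δ ≤ t)
    (hp : 1 / 2 + t ≤ p) (hp1 : p < 1) :
    4 * (t - δ) ≤ log ((p - δ) / (1 - p)) := by
  set s := t - δ
  have hratio : (1 + 2 * s) / (1 - 2 * s) ≤ (p - δ) / (1 - p) := by
    rw [show (1 + 2 * s) / (1 - 2 * s) = (1 / 2 + s) / (1 / 2 - s) by field_simp]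
    exact div_le_div₀ (by linarith) (by linarith) (by linarith) (by linarith)
  calc 4 * s = 2 * (2 * s) := by ring
    _ ≤ log ((1 + 2 * s) / (1 - 2 * s)) := two_mul_le_log_div (by linarith) (by linarith)
    _ ≤ log ((p - δ) / (1 - p)) := log_le_log (div_pos (by linarith) (by linarith)) hratio

/-- Quantitative privacy lower bound for the output-perturbation mechanism: with
`t = (c/(σ√(2π)))·exp(−c²/(2σ²))`, `0 ≤ δ ≤ t`, and `p = γ((−∞, c))` the success
probability of the optimal distinguisher under `γ = N(0, σ²)`, we have `p − δ > 0`,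
`1 − p > 0`, and `ln((p − δ)/(1 − p)) ≥ 4(t − δ)`. -/
theorem stmt_14 (σ c : ℝ) (hσ : 0 < σ) (hc : 0 < c)
    (t : ℝ) (ht : t = c / (σ * Real.sqrt (2 * π)) * Real.exp (-c ^ 2 / (2 * σ ^ 2)))
    (δ : ℝ) (hδ0 : 0 ≤ δ) (hδt : δ ≤ t)
    (p : ℝ) (hp : p = ((ProbabilityTheory.gaussianReal 0 (σ ^ 2).toNNReal) (Set.Iio c)).toReal) :
    0 < p - δ ∧ 0 < 1 - p ∧ 4 * (t - δ) ≤ Real.log ((p - δ) / (1 - p)) := by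
  set v := (σ ^ 2).toNNReal
  have hv : v ≠ 0 := by simpa [v] using hσ.ne'
  have ht_pdf : t = c * gaussianPDFReal 0 v c := by
    rw [ht, gaussianPDFReal, Real.coe_toNNReal _ (sq_nonneg σ), sub_zero, mul_comm (2 * π),
      sqrt_mul (sq_nonneg σ), sqrt_sq hσ.le]
    ring
  have hp_low : 1 / 2 + t ≤ p := ht_pdf ▸ hp ▸ half_add_mul_gaussianPDFReal_le hv hc.le
  have hp_lt : p < 1 := hp ▸ gaussianReal_real_Iio_lt_one 0 hv c
  exact ⟨by linarith, by linarith, four_mul_sub_le_log_div hδ0 hδt hp_low hp_lt⟩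
end
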